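/- arXiv:0710.2792 — 6 statements merged into one kernel-verified Lean document; each statement's English description precedes it below -/
import Mathlib

section
/- Let T > 0, d ≥ 1, set Z = (0,T)×ℝ^d, and let G, σ : Z → (d×d real matrices) be continuous functions such that σ(z)σ(z)ᵀ is positive definite for every z ∈ Z. Then there exists a Borel measurable function β : Z → ℝ^d such that β(z) = 0 whenever det G(z) ≠ 0, and such that whenever det G(z) = 0 one has G(z)σ(z)σ(z)ᵀβ(z) = 0 and β(z)ᵀσ(z)σ(z)ᵀβ(z) = 1. -/
/-!
A singular matrix `B` has a kernel vector depending measurably on `B`. Let `C` be the trailing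
coefficient of `adj (X - B)` in `(Matrix n n K)[X]`; comparing coefficients in
`(X - B) * adj (X - B) = χ_B • 1` gives `B * C = -c • 1` for a coefficient `c` of `χ_B`, and
`c = 0` because `B` is singular. So the nonzero columns of `C` lie in `ker B`. The columns of all
coefficients are polynomial in the entries of `B`, and a measurable choice among these countably
many candidates is made with `Nat.find`. For positive definite `S` and `B v = 0`, the vector
`u = adj S *ᵥ v` satisfies `B S u = det S • B v = 0`, and `β` is `u` rescaled to `uᵀ S u = 1`.
-/

open MeasureTheory Set Matrix Polynomial

theorem exists_measurable_selection {ι α β : Type*} [Countable ι] [MeasurableSpace α]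
    [MeasurableSpace β] [Nonempty β] {f : ι → α → β} {p : ι → α → Prop}
    (hf : ∀ i, Measurable (f i)) (hp : ∀ i, MeasurableSet {x | p i x}) :
    ∃ g : α → β, Measurable g ∧ ∀ x i, p i x → ∃ j, p j x ∧ g x = f j x := by
  classical
  rcases isEmpty_or_nonempty ι with hι | _
  · exact ⟨fun _ => Classical.arbitrary β, measurable_const, fun _ i => isEmptyElim i⟩
  obtain ⟨e, he⟩ := exists_surjective_nat ι
  let U := ⋃ i, {x | p i x}
  have hU : MeasurableSet U := .iUnion hp
  have hfind (x : α) : ∃ m, p (e m) x ∨ x ∉ U := by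
    by_cases hx : x ∈ U
    · obtain ⟨i, hi⟩ := mem_iUnion.mp hx
      obtain ⟨m, rfl⟩ := he i
      exact ⟨m, .inl hi⟩
    · exact ⟨0, .inr hx⟩
  have hpU (m : ℕ) : MeasurableSet {x | p (e m) x ∨ x ∉ U} := (hp (e m)).union hU.compl
  refine ⟨fun x => f (e (Nat.find (hfind x))) x, Measurable.find (fun m => hf (e m)) hpU hfind,
    fun x i hi => ⟨_, ?_, rfl⟩⟩
  exact (Nat.find_spec (hfind x)).resolve_right (not_not.mpr (mem_iUnion.mpr ⟨i, hi⟩))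

instance {m n : Type*} : MeasurableSpace (Matrix m n ℝ) := borel _

instance {m n : Type*} : BorelSpace (Matrix m n ℝ) := ⟨rfl⟩

namespace Matrix

variable {n : Type*} [Fintype n]

theorem PosDef.inv_sqrt_smul_dotProduct_mulVec_eq_one {S : Matrix n n ℝ} (hS : S.PosDef)
    {u : n → ℝ} (hu : u ≠ 0) :
    ((√(u ⬝ᵥ (S *ᵥ u)))⁻¹ • u) ⬝ᵥ (S *ᵥ ((√(u ⬝ᵥ (S *ᵥ u)))⁻¹ • u)) = 1 := by
  have hq : 0 < u ⬝ᵥ (S *ᵥ u) := by simpa [star_trivial] using hS.re_dotProduct_pos hu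
  rw [mulVec_smul, dotProduct_smul, smul_dotProduct, smul_eq_mul, smul_eq_mul, ← mul_assoc,
    ← mul_inv, Real.mul_self_sqrt hq.le, inv_mul_cancel₀ hq.ne']

variable [DecidableEq n]

theorem continuous_coeff_adjugate_charmatrix {R : Type*} [CommRing R] [TopologicalSpace R]
    [IsTopologicalRing R] (k : ℕ) :
    Continuous fun B : Matrix n n R => (matPolyEquiv (charmatrix B).adjugate).coeff k := by
  have key (B : Matrix n n R) (i j : n) : ((charmatrix B).adjugate i j).coeff k =
      MvPolynomial.eval (fun p : n × n => B p.1 p.2)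
        (((charmatrix (mvPolynomialX n n R)).adjugate i j).coeff k) := by
    conv_lhs => rw [← mvPolynomialX_mapMatrix_eval B, RingHom.mapMatrix_apply, charmatrix_map,
      ← Polynomial.coe_mapRingHom, ← RingHom.mapMatrix_apply, ← RingHom.map_adjugate]
    simp [Polynomial.coeff_map]
  refine continuous_matrix fun i j => ?_
  simp_rw [matPolyEquiv_coeff_apply, key]
  exact (MvPolynomial.continuous_eval _).comp
    (continuous_pi fun p => (continuous_apply p.2).comp (continuous_apply p.1))

theorem exists_mul_coeff_adjugate_charmatrix_eq_zero {K : Type*} [Field K]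
    {B : Matrix n n K} (hB : B.det = 0) :
    ∃ k, (matPolyEquiv (charmatrix B).adjugate).coeff k ≠ 0 ∧
      B * (matPolyEquiv (charmatrix B).adjugate).coeff k = 0 := by
  set p := matPolyEquiv (charmatrix B).adjugate
  have hid : (X - C B) * p = B.charpoly.map (algebraMap K (Matrix n n K)) := by
    rw [← matPolyEquiv_charmatrix, ← map_mul, mul_adjugate, ← matPolyEquiv_smul_one]
    rfl
  have : Nonempty n := by
    by_contra h
    simp [not_nonempty_iff.mp h] at hB
  have hp : p ≠ 0 := by
    intro h0
    rw [h0, mul_zero, eq_comm, Polynomial.map_eq_zero_iff (algebraMap K _).injective] at hid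
    exact B.charpoly_monic.ne_zero hid
  set k := p.natTrailingDegree
  have hX : (X * p).coeff k = 0 := by
    rcases hk : k with _ | m
    · exact coeff_X_mul_zero p
    · rw [coeff_X_mul]
      exact coeff_eq_zero_of_lt_natTrailingDegree (by omega)
  have hBM : B * p.coeff k = algebraMap K _ (-B.charpoly.coeff k) := by
    have := congrArg (coeff · k) hid
    simp only [sub_mul, coeff_sub, hX, coeff_C_mul, coeff_map, zero_sub] at this
    rw [map_neg, ← this, neg_neg]
  refine ⟨k, mt trailingCoeff_eq_zero.mp hp, ?_⟩
  suffices B.charpoly.coeff k = 0 by rw [hBM, this, neg_zero, map_zero]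
  by_contra hc
  have := congrArg det hBM
  rw [det_mul, hB, zero_mul, algebraMap_eq_diagonal, det_diagonal] at this
  simp only [Pi.algebraMap_apply, Algebra.algebraMap_self, RingHom.id_apply] at this
  exact Finset.prod_ne_zero_iff.mpr (fun _ _ => neg_ne_zero.mpr hc) this.symm

theorem exists_measurable_ne_zero_mulVec_eq_zero :
    ∃ κ : Matrix n n ℝ → n → ℝ, Measurable κ ∧ ∀ B, B.det = 0 → κ B ≠ 0 ∧ B *ᵥ κ B = 0 := by
  let col (ki : ℕ × n) (B : Matrix n n ℝ) : n → ℝ :=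
    (matPolyEquiv (charmatrix B).adjugate).coeff ki.1 *ᵥ Pi.single ki.2 1
  have hcol (ki : ℕ × n) : Continuous (col ki) :=
    (continuous_coeff_adjugate_charmatrix ki.1).matrix_mulVec continuous_const
  obtain ⟨κ, hκ, hκspec⟩ := exists_measurable_selection (fun ki => (hcol ki).measurable)
    (p := fun ki B => col ki B ≠ 0 ∧ B *ᵥ col ki B = 0) fun ki =>
      (isOpen_ne_fun (hcol ki) continuous_const).measurableSet.inter
        (isClosed_eq (continuous_id.matrix_mulVec (hcol ki)) continuous_const).measurableSet
  refine ⟨κ, hκ, fun B hB => ?_⟩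
  obtain ⟨k, hM, hBM⟩ := exists_mul_coeff_adjugate_charmatrix_eq_zero hB
  obtain ⟨i, hi⟩ : ∃ i, col (k, i) B ≠ 0 := by
    by_contra! h
    exact hM (ext_of_mulVec_single fun i => by rw [zero_mulVec]; exact h i)
  have hBi : B *ᵥ col (k, i) B = 0 := by simp only [col, mulVec_mulVec, hBM, zero_mulVec]
  obtain ⟨ki, hki, hκB⟩ := hκspec B (k, i) ⟨hi, hBi⟩
  exact hκB ▸ hki

theorem exists_measurable_normalized_mul_mulVec_eq_zero {α : Type*} [MeasurableSpace α]
    {A S : α → Matrix n n ℝ} (hA : Measurable A) (hS : Measurable S) :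
    ∃ β : α → n → ℝ, Measurable β ∧ ∀ x, (S x).PosDef →
      ((A x).det ≠ 0 → β x = 0) ∧
      ((A x).det = 0 → (A x * S x) *ᵥ β x = 0 ∧ β x ⬝ᵥ (S x *ᵥ β x) = 1) := by
  classical
  obtain ⟨κ, hκ, hκA⟩ := exists_measurable_ne_zero_mulVec_eq_zero (n := n)
  set u := fun x => (S x).adjugate *ᵥ κ (A x)
  have hu : Measurable u :=
    (continuous_fst.matrix_mulVec continuous_snd).measurable2
      (continuous_id.matrix_adjugate.measurable.comp hS) (hκ.comp hA)
  have hq : Measurable fun x => u x ⬝ᵥ (S x *ᵥ u x) :=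
    (continuous_fst.dotProduct continuous_snd).measurable2 hu
      ((continuous_fst.matrix_mulVec continuous_snd).measurable2 hS hu)
  refine ⟨fun x => if (A x).det = 0 then (√(u x ⬝ᵥ (S x *ᵥ u x)))⁻¹ • u x else 0,
    Measurable.ite ((continuous_id.matrix_det.measurable.comp hA) (measurableSet_singleton 0))
      (hq.sqrt.inv.smul hu) measurable_const,
    fun x hSx => ⟨fun hAx => if_neg hAx, fun hAx => ?_⟩⟩
  obtain ⟨hκ0, hAκ⟩ := hκA (A x) hAx
  have hSu : S x *ᵥ u x = (S x).det • κ (A x) := by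
    rw [mulVec_mulVec, mul_adjugate, smul_mulVec, one_mulVec]
  have hu0 : u x ≠ 0 := fun h0 => by
    rw [h0, mulVec_zero, eq_comm, smul_eq_zero] at hSu
    exact hSu.elim hSx.det_pos.ne' hκ0
  simp only [if_pos hAx]
  refine ⟨?_, hSx.inv_sqrt_smul_dotProduct_mulVec_eq_one hu0⟩
  rw [mulVec_smul, ← mulVec_mulVec, hSu, mulVec_smul, hAκ, smul_zero, smul_zero]

end Matrix

theorem stmt_1_general (d : ℕ) (T : ℝ)
    (G σ : ℝ × (Fin d → ℝ) → Matrix (Fin d) (Fin d) ℝ)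
    (hGc : ContinuousOn G (Ioo 0 T ×ˢ (univ : Set (Fin d → ℝ))))
    (hσc : ContinuousOn σ (Ioo 0 T ×ˢ (univ : Set (Fin d → ℝ))))
    (hpd : ∀ z ∈ Ioo 0 T ×ˢ (univ : Set (Fin d → ℝ)), (σ z * (σ z)ᵀ).PosDef) :
    ∃ β : ℝ × (Fin d → ℝ) → (Fin d → ℝ), Measurable β ∧
      ∀ z ∈ Ioo 0 T ×ˢ (univ : Set (Fin d → ℝ)),
        ((G z).det ≠ 0 → β z = 0) ∧
        ((G z).det = 0 →
          (G z * (σ z * (σ z)ᵀ)) *ᵥ β z = 0 ∧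
          β z ⬝ᵥ ((σ z * (σ z)ᵀ) *ᵥ β z) = 1) := by
  classical
  set Z := Ioo 0 T ×ˢ (univ : Set (Fin d → ℝ))
  have hZ : MeasurableSet Z := (isOpen_Ioo.prod isOpen_univ).measurableSet
  have hG : Measurable (Z.piecewise G 1) := hGc.measurable_piecewise continuousOn_const hZ
  have hS : Measurable (Z.piecewise (fun z => σ z * (σ z)ᵀ) 1) :=
    (hσc.mul (continuous_id.matrix_transpose.comp_continuousOn hσc)).measurable_piecewise
      continuousOn_const hZ
  obtain ⟨β, hβ, hβspec⟩ := exists_measurable_normalized_mul_mulVec_eq_zero hG hS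
  refine ⟨β, hβ, fun z hz => ?_⟩
  have hβz := hβspec z
  simp only [piecewise_eq_of_mem _ _ _ hz] at hβz
  exact hβz (hpd z hz)

/-- Measurable selection lemma (Lemma 7.1 of the paper).  Given continuous
matrix-valued maps `G, σ` on `Z = (0,T) × ℝ^d` such that `σ z * (σ z)ᵀ` is positive definite
on `Z`, there is a Borel measurable `β : Z → ℝ^d` vanishing where `det (G z) ≠ 0` and
satisfying `G z σ z σ zᵀ β z = 0` and `β zᵀ σ z σ zᵀ β z = 1` where `det (G z) = 0`. -/
theorem stmt_1 (d : ℕ) (hd : 1 ≤ d) (T : ℝ) (hT : 0 < T)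
    (G σ : ℝ × (Fin d → ℝ) → Matrix (Fin d) (Fin d) ℝ)
    (hGc : ContinuousOn G (Ioo 0 T ×ˢ (univ : Set (Fin d → ℝ))))
    (hσc : ContinuousOn σ (Ioo 0 T ×ˢ (univ : Set (Fin d → ℝ))))
    (hpd : ∀ z ∈ Ioo 0 T ×ˢ (univ : Set (Fin d → ℝ)), (σ z * (σ z)ᵀ).PosDef) :
    ∃ β : ℝ × (Fin d → ℝ) → (Fin d → ℝ), Measurable β ∧
      ∀ z ∈ Ioo 0 T ×ˢ (univ : Set (Fin d → ℝ)),
        ((G z).det ≠ 0 → β z = 0) ∧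
        ((G z).det = 0 →
          (G z * (σ z * (σ z)ᵀ)) *ᵥ β z = 0 ∧
          β z ⬝ᵥ ((σ z * (σ z)ᵀ) *ᵥ β z) = 1) :=
  stmt_1_general d T G σ hGc hσc hpd
end

section
/- Let T > 0, r ≥ 0, and let σ : (0,T)×(0,∞)×ℝ → ℝ be such that for Lebesgue-almost every (t,s) ∈ (0,T)×(0,∞) the function y ↦ σ(t,s,y)² is non-constant on ℝ. Let v : (0,T]×(0,∞) → ℝ be continuous, possessing continuous partial derivatives ∂v/∂t, ∂v/∂s, ∂²v/∂s² on (0,T)×(0,∞), and suppose that for every (t,s) ∈ (0,T)×(0,∞) and every y ∈ ℝ: ∂v/∂t(t,s) + r s ∂v/∂s(t,s) + ½ σ(t,s,y)² s² ∂²v/∂s²(t,s) − r v(t,s) = 0. Then the terminal value is affine: there exist constants a, b ∈ ℝ with v(T,s) = a + b s for all s > 0. -/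
/-!
Since the PDE holds for every `y`, subtracting it at two values of `y` with different `σ²`
forces `s² ∂²v/∂s² = 0` at almost every point, hence everywhere by continuity. So for every
`t < T` the map `s ↦ v(t,s)` is affine on `(0,∞)`. Affine functions on `(0,∞)` form a
two-dimensional, hence closed, subspace of `(0,∞) → ℝ` with the topology of pointwise
convergence, and `v(t,·) → v(T,·)` pointwise as `t → T⁻`.
-/

open MeasureTheory Set Filter Topology

lemma eq_zero_of_forall_add_mul_eq_zero {R ι : Type*} [CommRing R] [IsDomain R]
    {A B : R} {q : ι → R} (h : ∀ y, A + q y * B = 0) {y₁ y₂ : ι} (hq : q y₁ ≠ q y₂) :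
    B = 0 := by
  by_contra hB
  exact hq (mul_right_cancel₀ hB (by linear_combination h y₁ - h y₂))

lemma IsOpen.exists_affine_of_hasDerivAt_zero {𝕜 : Type*} [RCLike 𝕜] {s : Set 𝕜}
    (hs : IsOpen s) (hs' : IsPreconnected s) {f f' : 𝕜 → 𝕜}
    (hf : ∀ x ∈ s, HasDerivAt f (f' x) x) (hf' : ∀ x ∈ s, HasDerivAt f' 0 x) :
    ∃ a b, ∀ x ∈ s, f x = a + b * x := by
  obtain ⟨b, hb⟩ := hs.exists_is_const_of_deriv_eq_zero hs'
    (fun x hx => (hf' x hx).differentiableAt.differentiableWithinAt)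
    (fun x hx => (hf' x hx).deriv)
  obtain ⟨a, ha⟩ := hs.exists_eq_add_of_deriv_eq hs'
    (fun x hx => (hf x hx).differentiableAt.differentiableWithinAt)
    (differentiableOn_id.const_mul b)
    (fun x hx => by simp [(hf x hx).deriv, hb x hx])
  exact ⟨a, b, fun x hx => (ha hx).trans (add_comm _ _)⟩

lemma isClosed_setOf_exists_affine (s : Set ℝ) :
    IsClosed {f : s → ℝ | ∃ a b : ℝ, ∀ x, f x = a + b * x} := by
  have hspan : {f : s → ℝ | ∃ a b : ℝ, ∀ x, f x = a + b * x} =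
      (Submodule.span ℝ {1, (↑)} : Submodule ℝ (s → ℝ)) := by
    ext f
    simp [Submodule.mem_span_pair, funext_iff, eq_comm]
  rw [hspan]
  have := FiniteDimensional.span_of_finite ℝ (toFinite {(1 : s → ℝ), (↑)})
  exact Submodule.closed_of_finiteDimensional _

theorem stmt_2_general (T r : ℝ) (hT : 0 < T)
    (σ : ℝ → ℝ → ℝ → ℝ)
    (hσ : ∀ᵐ p ∂(volume.restrict ((Ioo 0 T ×ˢ Ioi 0 : Set (ℝ × ℝ)))),
      ∃ y₁ y₂ : ℝ, σ p.1 p.2 y₁ ^ 2 ≠ σ p.1 p.2 y₂ ^ 2)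
    (v vt vs vss : ℝ → ℝ → ℝ)
    (hvc : ContinuousOn (fun p : ℝ × ℝ => v p.1 p.2) (Ioc 0 T ×ˢ Ioi 0))
    (hvs : ∀ t ∈ Ioo 0 T, ∀ s ∈ Ioi (0 : ℝ), HasDerivAt (fun s' => v t s') (vs t s) s)
    (hvss : ∀ t ∈ Ioo 0 T, ∀ s ∈ Ioi (0 : ℝ), HasDerivAt (fun s' => vs t s') (vss t s) s)
    (hvssc : ContinuousOn (fun p : ℝ × ℝ => vss p.1 p.2) (Ioo 0 T ×ˢ Ioi 0))
    (hpde : ∀ t ∈ Ioo 0 T, ∀ s ∈ Ioi (0 : ℝ), ∀ y : ℝ,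
      vt t s + r * s * vs t s + σ t s y ^ 2 / 2 * s ^ 2 * vss t s - r * v t s = 0) :
    ∃ a b : ℝ, ∀ s > (0 : ℝ), v T s = a + b * s := by
  have hU : IsOpen (Ioo 0 T ×ˢ Ioi 0 : Set (ℝ × ℝ)) := isOpen_Ioo.prod isOpen_Ioi
  have hvss_ae : (fun p : ℝ × ℝ => vss p.1 p.2) =ᵐ[volume.restrict (Ioo 0 T ×ˢ Ioi 0)] 0 := by
    filter_upwards [hσ, ae_restrict_mem hU.measurableSet] with ⟨t, s⟩ ⟨y₁, y₂, hy⟩ ⟨ht, hs⟩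
    have := eq_zero_of_forall_add_mul_eq_zero (A := vt t s + r * s * vs t s - r * v t s)
      (q := fun y => σ t s y ^ 2) (B := s ^ 2 / 2 * vss t s)
      (fun y => by linear_combination hpde t ht s hs y) hy
    simpa [(mem_Ioi.mp hs).ne'] using this
  have hvss0 := Measure.eqOn_open_of_ae_eq hvss_ae hU hvssc continuousOn_const
  have haff : ∀ t ∈ Ioo 0 T, (Ioi (0 : ℝ)).domRestrict (v t) ∈
      {f : Ioi (0 : ℝ) → ℝ | ∃ a b : ℝ, ∀ x, f x = a + b * x} := fun t ht => by
    obtain ⟨a, b, h⟩ := isOpen_Ioi.exists_affine_of_hasDerivAt_zero isPreconnected_Ioi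
      (hvs t ht) fun s hs => by
      simpa [show vss t s = 0 from hvss0 (x := (t, s)) ⟨ht, hs⟩] using hvss t ht s hs
    exact ⟨a, b, fun x => h x x.2⟩
  have : NeBot (𝓝[Ioo 0 T] T) := right_nhdsWithin_Ioo_neBot hT
  have hlim : Tendsto (fun t => (Ioi (0 : ℝ)).domRestrict (v t)) (𝓝[Ioo 0 T] T)
      (𝓝 ((Ioi (0 : ℝ)).domRestrict (v T))) := tendsto_pi_nhds.mpr fun x =>
    ((hvc.uncurry_right (x : ℝ) x.2 T (right_mem_Ioc.mpr hT)).tendsto).mono_left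
      (nhdsWithin_mono _ Ioo_subset_Ioc_self)
  obtain ⟨a, b, h⟩ := (isClosed_setOf_exists_affine _).mem_of_tendsto hlim
    (eventually_mem_nhdsWithin.mono haff)
  exact ⟨a, b, fun s hs => h ⟨s, hs⟩⟩

/-- PDE core of Proposition 5.1.  If `v(t,s)` is continuous on `(0,T] × (0,∞)`,
has continuous partial derivatives `∂v/∂t`, `∂v/∂s`, `∂²v/∂s²` on `(0,T) × (0,∞)`, satisfies
the Black–Scholes-type PDE `∂v/∂t + r s ∂v/∂s + σ(t,s,y)²/2 · s² ∂²v/∂s² − r v = 0` for every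
`(t,s)` in the domain and every `y ∈ ℝ`, and if for a.e. `(t,s)` the map `y ↦ σ(t,s,y)²` is
non-constant, then the terminal value `v(T,·)` is affine. -/
theorem stmt_2 (T r : ℝ) (hT : 0 < T) (hr : 0 ≤ r)
    (σ : ℝ → ℝ → ℝ → ℝ)
    (hσ : ∀ᵐ p ∂(volume.restrict ((Ioo 0 T ×ˢ Ioi 0 : Set (ℝ × ℝ)))),
      ∃ y₁ y₂ : ℝ, σ p.1 p.2 y₁ ^ 2 ≠ σ p.1 p.2 y₂ ^ 2)
    (v vt vs vss : ℝ → ℝ → ℝ)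
    (hvc : ContinuousOn (fun p : ℝ × ℝ => v p.1 p.2) (Ioc 0 T ×ˢ Ioi 0))
    (hvt : ∀ t ∈ Ioo 0 T, ∀ s ∈ Ioi (0 : ℝ), HasDerivAt (fun t' => v t' s) (vt t s) t)
    (hvs : ∀ t ∈ Ioo 0 T, ∀ s ∈ Ioi (0 : ℝ), HasDerivAt (fun s' => v t s') (vs t s) s)
    (hvss : ∀ t ∈ Ioo 0 T, ∀ s ∈ Ioi (0 : ℝ), HasDerivAt (fun s' => vs t s') (vss t s) s)
    (hvtc : ContinuousOn (fun p : ℝ × ℝ => vt p.1 p.2) (Ioo 0 T ×ˢ Ioi 0))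
    (hvsc : ContinuousOn (fun p : ℝ × ℝ => vs p.1 p.2) (Ioo 0 T ×ˢ Ioi 0))
    (hvssc : ContinuousOn (fun p : ℝ × ℝ => vss p.1 p.2) (Ioo 0 T ×ˢ Ioi 0))
    (hpde : ∀ t ∈ Ioo 0 T, ∀ s ∈ Ioi (0 : ℝ), ∀ y : ℝ,
      vt t s + r * s * vs t s + σ t s y ^ 2 / 2 * s ^ 2 * vss t s - r * v t s = 0) :
    ∃ a b : ℝ, ∀ s > (0 : ℝ), v T s = a + b * s :=
  stmt_2_general T r hT σ hσ v vt vs vss hvc hvs hvss hvssc hpde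
end

section
/- Let T > 0, d ≥ 1, set Z = (0,T)×ℝ^d, and let Γ : Z → (d×d real matrices) be continuous. Define the set-valued map F on Z by F(z) = {0} if det Γ(z) ≠ 0 and F(z) = {y ∈ ℝ^d : Γ(z)y = 0 and |y| = 1} if det Γ(z) = 0. Then for every closed set U ⊆ ℝ^d, the set F⁻(U) = {z ∈ Z : F(z) ∩ U ≠ ∅} is a Borel measurable subset of Z. -/
/-!
`F⁻(U)` is the union of the relatively open set `{z ∈ Z | det Γ(z) ≠ 0}` (only when `0 ∈ U`)
and the set of `z ∈ Z` for which `Γ(z)` kills a unit vector of `U`; such a vector already forces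
`det Γ(z) = 0`. The second set is relatively closed in `Z`, being the projection along the compact
factor `U ∩ S^{d-1}` of a relatively closed subset of `Z × (U ∩ S^{d-1})`.
-/

open MeasureTheory Set Matrix

theorem isCompact_setOf_dotProduct_self_eq_one (ι : Type*) [Fintype ι] :
    IsCompact {y : ι → ℝ | y ⬝ᵥ y = 1} := by
  have hsphere : {y : ι → ℝ | y ⬝ᵥ y = 1} =
      WithLp.ofLp '' Metric.sphere (0 : EuclideanSpace ℝ ι) 1 := by
    ext y
    have hy : y ⬝ᵥ y = ‖WithLp.toLp 2 y‖ ^ 2 := by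
      rw [← real_inner_self_eq_norm_sq, EuclideanSpace.inner_eq_star_dotProduct]; rfl
    change y ⬝ᵥ y = 1 ↔ _
    rw [hy, pow_eq_one_iff_of_nonneg (norm_nonneg _) two_ne_zero]
    exact ⟨fun h => ⟨_, by simpa using h, rfl⟩, by rintro ⟨x, hx, rfl⟩; simpa using hx⟩
  rw [hsphere]
  exact (isCompact_sphere _ _).image (PiLp.continuous_ofLp 2 _)

section Projection

variable {X Y E : Type*} [TopologicalSpace X] [TopologicalSpace Y] [TopologicalSpace E]

theorem IsClosed.image_fst_inter_prod_of_isCompact {C : Set (X × Y)} (hC : IsClosed C)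
    {K : Set Y} (hK : IsCompact K) : IsClosed (Prod.fst '' (C ∩ univ ×ˢ K)) := by
  have : CompactSpace K := isCompact_iff_compactSpace.mp hK
  convert isClosedMap_fst_of_compactSpace (X := X) (Y := K) _
    (hC.preimage (continuous_id.prodMap continuous_subtype_val)) using 1
  ext x
  simp [and_comm]

theorem ContinuousOn.exists_isClosed_setOf_exists_mem_eq_inter {f : X × Y → E} {s : Set X}
    {K : Set Y} (hf : ContinuousOn f (s ×ˢ K)) (hK : IsCompact K) {t : Set E} (ht : IsClosed t) :
    ∃ C, IsClosed C ∧ {x ∈ s | ∃ y ∈ K, f (x, y) ∈ t} = s ∩ C := by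
  obtain ⟨D, hD, hDf⟩ := continuousOn_iff_isClosed.mp hf t ht
  refine ⟨_, hD.image_fst_inter_prod_of_isCompact hK, ?_⟩
  ext x
  constructor
  · rintro ⟨hx, y, hy, hfy⟩
    have : (x, y) ∈ D ∩ s ×ˢ K := hDf ▸ ⟨hfy, hx, hy⟩
    exact ⟨hx, (x, y), ⟨this.1, trivial, hy⟩, rfl⟩
  · rintro ⟨hx, ⟨x, y⟩, ⟨hD, -, hy⟩, rfl⟩
    have : (x, y) ∈ f ⁻¹' t ∩ s ×ˢ K := hDf ▸ ⟨hD, hx, hy⟩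
    exact ⟨hx, y, hy, this.1⟩

theorem ContinuousOn.measurableSet_setOf_exists_mem [MeasurableSpace X] [OpensMeasurableSpace X]
    {f : X × Y → E} {s : Set X} {K : Set Y} (hf : ContinuousOn f (s ×ˢ K)) (hs : MeasurableSet s)
    (hK : IsCompact K) {t : Set E} (ht : IsClosed t) :
    MeasurableSet {x ∈ s | ∃ y ∈ K, f (x, y) ∈ t} := by
  obtain ⟨C, hC, hCs⟩ := hf.exists_isClosed_setOf_exists_mem_eq_inter hK ht
  exact hCs ▸ hs.inter hC.measurableSet

end Projection

theorem stmt_3_general (d : ℕ) (T : ℝ)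
    (Γ : ℝ × (Fin d → ℝ) → Matrix (Fin d) (Fin d) ℝ)
    (hΓ : ContinuousOn Γ (Ioo 0 T ×ˢ (univ : Set (Fin d → ℝ))))
    (F : ℝ × (Fin d → ℝ) → Set (Fin d → ℝ))
    (hF0 : ∀ z, (Γ z).det ≠ 0 → F z = {0})
    (hF1 : ∀ z, (Γ z).det = 0 → F z = {y | Γ z *ᵥ y = 0 ∧ y ⬝ᵥ y = 1}) :
    ∀ U : Set (Fin d → ℝ), IsClosed U →
      MeasurableSet {z ∈ Ioo 0 T ×ˢ (univ : Set (Fin d → ℝ)) | (F z ∩ U).Nonempty} := by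
  intro U hU
  set Z := Ioo 0 T ×ˢ (univ : Set (Fin d → ℝ))
  set S := {y : Fin d → ℝ | y ⬝ᵥ y = 1}
  have hZ : IsOpen Z := isOpen_Ioo.prod isOpen_univ
  have hsplit : {z ∈ Z | (F z ∩ U).Nonempty} =
      {z ∈ Z | (Γ z).det ≠ 0} ∩ {_z | (0 : Fin d → ℝ) ∈ U} ∪ {z ∈ Z | ∃ y ∈ U ∩ S, Γ z *ᵥ y = 0} := by
    ext z
    by_cases hdet : (Γ z).det = 0
    · simp [hF1 z hdet, hdet, S, Set.Nonempty, and_comm, and_left_comm, and_assoc]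
    · have hker : ∀ y ∈ S, Γ z *ᵥ y ≠ 0 := fun y hy hΓy => hdet <|
        exists_mulVec_eq_zero_iff.mp ⟨y, fun h => by simp [S, h] at hy, hΓy⟩
      simp +contextual [hF0 z hdet, hdet, hker]
  rw [hsplit]
  refine .union (.inter ?_ (.const _)) ?_
  · exact ((continuous_id.matrix_det).comp_continuousOn hΓ).isOpen_inter_preimage hZ
      isOpen_compl_singleton |>.measurableSet
  · have hΓy : ContinuousOn (fun p : (ℝ × (Fin d → ℝ)) × (Fin d → ℝ) => Γ p.1 *ᵥ p.2)
        (Z ×ˢ (U ∩ S)) :=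
      (continuous_fst.matrix_mulVec continuous_snd).comp_continuousOn
        ((hΓ.comp continuousOn_fst fun _ hp => hp.1).prodMk continuousOn_snd)
    exact hΓy.measurableSet_setOf_exists_mem hZ.measurableSet
      ((isCompact_setOf_dotProduct_self_eq_one _).inter_left hU) isClosed_singleton

/-- Measurability of the preimages of the multifunction `F` from Lemma 7.1:
`F z = {0}` where `det Γ(z) ≠ 0` and `F z = Ker Γ(z) ∩ {|y| = 1}` where `det Γ(z) = 0`.
For every closed `U ⊆ ℝ^d`, the set `F⁻(U) = {z ∈ Z : F(z) ∩ U ≠ ∅}` is Borel measurable. -/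
theorem stmt_3 (d : ℕ) (hd : 1 ≤ d) (T : ℝ) (hT : 0 < T)
    (Γ : ℝ × (Fin d → ℝ) → Matrix (Fin d) (Fin d) ℝ)
    (hΓ : ContinuousOn Γ (Ioo 0 T ×ˢ (univ : Set (Fin d → ℝ))))
    (F : ℝ × (Fin d → ℝ) → Set (Fin d → ℝ))
    (hF0 : ∀ z, (Γ z).det ≠ 0 → F z = {0})
    (hF1 : ∀ z, (Γ z).det = 0 → F z = {y | Γ z *ᵥ y = 0 ∧ y ⬝ᵥ y = 1}) :
    ∀ U : Set (Fin d → ℝ), IsClosed U →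
      MeasurableSet {z ∈ Ioo 0 T ×ˢ (univ : Set (Fin d → ℝ)) | (F z ∩ U).Nonempty} :=
  stmt_3_general d T Γ hΓ F hF0 hF1
end

section
/- For T > 0 and d ≥ 1, let h : ℝ^d → ℝ be Lebesgue measurable with polynomial growth, i.e. there are constants a ≥ 0 and m ∈ ℕ with |h(u)| ≤ a(1+|u|)^m for all u ∈ ℝ^d; define the Gaussian convolution v : (0,T)×ℝ^d → ℝ by v(t,x) = (2π(T−t))^{−d/2} ∫_{ℝ^d} h(u) exp(−|u−x|²/(2(T−t))) du. Then v is real analytic on (0,T)×ℝ^d, jointly in (t,x). -/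
/-!
Put `r = 1/(T - t)` and `w = x/(T - t)`. Expanding the square,
`-|u - x|²/(2(T - t)) = -|x|²/(2(T - t)) + ℓ_u(r, w)` with `ℓ_u(r, w) = -|u|² r/2 + ⟨u, w⟩`
linear in `(r, w)`, so `v` is an analytic prefactor times the Laplace-type transform
`Ψ(θ) = ∫ h(u) exp(ℓ_u(θ)) du` evaluated at an analytic function of `(t, x)`.
`Ψ` is analytic at `θ₀` as soon as `∫ |h(u)| exp(ℓ_u(θ₀) + ε‖ℓ_u‖) du < ∞` for some
`ε > 0`: expanding `exp(ℓ_u(θ₀ + y)) = exp(ℓ_u(θ₀)) ∑ ℓ_u(y)ⁿ/n!` and integrating term by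
term gives a power series of radius `ε`. For `r > 0` the Gaussian factor `exp(-|u|² r/2)`
beats both `exp(ε‖ℓ_u‖) ≤ exp(ε(|u|²/2 + ∑|u_j|))` with `ε = r/2` and the polynomial
growth of `h`.
-/

open MeasureTheory Set Real
open scoped NNReal ENNReal ContDiff

section PowerSeriesIntegral

variable {α E F : Type*} [MeasurableSpace α] {μ : Measure α}
  [NormedAddCommGroup E] [NormedSpace ℝ E] [NormedAddCommGroup F] [NormedSpace ℝ F]

theorem hasFPowerSeriesOnBall_integral {Φ : α → E → F}
    {q : α → FormalMultilinearSeries ℝ E F} {r : ℝ≥0} {G : α → ℝ} (hr : 0 < r)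
    (hΦ : ∀ u, HasFPowerSeriesOnBall (Φ u) (q u) 0 r)
    (hq : ∀ n, Integrable (fun u => q u n) μ) (hG : Integrable G μ)
    (hqG : ∀ u N, ∑ n ∈ Finset.range N, ‖q u n‖ * r ^ n ≤ G u) :
    HasFPowerSeriesOnBall (fun y => ∫ u, Φ u y ∂μ) (fun n => ∫ u, q u n ∂μ) 0 r where
  r_le := by
    refine FormalMultilinearSeries.le_radius_of_bound _ (∫ u, G u ∂μ) fun n => ?_
    calc ‖∫ u, q u n ∂μ‖ * r ^ n ≤ (∫ u, ‖q u n‖ ∂μ) * r ^ n := by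
          gcongr; exact norm_integral_le_integral_norm _
      _ = ∫ u, ‖q u n‖ * r ^ n ∂μ := (integral_mul_const _ _).symm
      _ ≤ ∫ u, G u ∂μ := by
          refine integral_mono ((hq n).norm.mul_const _) hG fun u => ?_
          simpa [Finset.sum_range_succ] using
            (Finset.single_le_sum (fun k _ => by positivity)
              (Finset.self_mem_range_succ n)).trans (hqG u (n + 1))
  r_pos := by exact_mod_cast hr
  hasSum := by
    intro y hy
    have hyr : ‖y‖ ≤ r := by
      rw [mem_eball_zero_iff, enorm_eq_nnnorm, ENNReal.coe_lt_coe] at hy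
      exact hy.le
    have hterm : ∀ n, Integrable (fun u => q u n fun _ => y) μ := fun n =>
      (ContinuousMultilinearMap.apply ℝ (fun _ : Fin n => E) F fun _ => y).integrable_comp (hq n)
    have hsum : Summable fun n => ∫ u, ‖q u n fun _ => y‖ ∂μ := by
      refine summable_of_sum_range_le (c := ∫ u, G u ∂μ)
        (fun n => integral_nonneg fun u => norm_nonneg _) fun N => ?_
      rw [← integral_finsetSum _ fun n _ => (hterm n).norm]
      refine integral_mono (integrable_finsetSum _ fun n _ => (hterm n).norm) hG fun u => ?_
      refine le_trans (Finset.sum_le_sum fun n _ => ?_) (hqG u N)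
      calc ‖q u n fun _ => y‖ ≤ ‖q u n‖ * ∏ _ : Fin n, ‖y‖ := (q u n).le_opNorm _
        _ ≤ ‖q u n‖ * r ^ n := by simp only [Finset.prod_const, Finset.card_fin]; gcongr
    simp only [zero_add, ContinuousMultilinearMap.integral_apply (hq _)]
    have hΦsum : ∀ u, ∑' n, q u n (fun _ => y) = Φ u y := fun u => by
      simpa using ((hΦ u).hasSum hy).tsum_eq
    simpa only [hΦsum] using hasSum_integral_of_summable_integral_norm hterm hsum

theorem hasFPowerSeriesOnBall_const_mul_exp_clm (c : ℝ) (ℓ : E →L[ℝ] ℝ) :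
    HasFPowerSeriesOnBall (fun y => c * exp (ℓ y))
      (c • (NormedSpace.expSeries ℝ ℝ).compContinuousLinearMap ℓ) 0 ∞ := by
  have h : HasFPowerSeriesOnBall NormedSpace.exp (NormedSpace.expSeries ℝ ℝ) (ℓ 0) ∞ := by
    simpa using NormedSpace.exp_hasFPowerSeriesOnBall (𝕂 := ℝ) (𝔸 := ℝ)
  have h' := h.compContinuousLinearMap
  rw [ENNReal.top_div_of_ne_top enorm_ne_top] at h'
  convert! h'.const_smul (c := c) using 1
  ext y
  simp [Real.exp_eq_exp_ℝ]

theorem norm_expSeries_compContinuousLinearMap_le (ℓ : E →L[ℝ] ℝ) (n : ℕ) :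
    ‖(NormedSpace.expSeries ℝ ℝ).compContinuousLinearMap ℓ n‖ ≤ ‖ℓ‖ ^ n / n.factorial := by
  calc _ ≤ ‖NormedSpace.expSeries ℝ ℝ n‖ * ∏ _ : Fin n, ‖ℓ‖ :=
        ContinuousMultilinearMap.norm_compContinuousLinearMap_le _ _
    _ = ‖ℓ‖ ^ n / n.factorial := by
        rw [NormedSpace.expSeries_eq_ofScalars, FormalMultilinearSeries.ofScalars_norm]
        simp [div_eq_inv_mul]

theorem norm_smul_expSeries_compContinuousLinearMap_mul_pow_le (c : ℝ) (ℓ : E →L[ℝ] ℝ)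
    {r : ℝ} (hr : 0 ≤ r) (n : ℕ) :
    ‖(c • (NormedSpace.expSeries ℝ ℝ).compContinuousLinearMap ℓ) n‖ * r ^ n ≤
      |c| * ((r * ‖ℓ‖) ^ n / n.factorial) := by
  calc ‖(c • (NormedSpace.expSeries ℝ ℝ).compContinuousLinearMap ℓ) n‖ * r ^ n
      ≤ |c| * (‖ℓ‖ ^ n / n.factorial) * r ^ n := by
        rw [FormalMultilinearSeries.smul_apply, norm_smul, Real.norm_eq_abs]
        gcongr
        exact norm_expSeries_compContinuousLinearMap_le ℓ n
    _ = |c| * ((r * ‖ℓ‖) ^ n / n.factorial) := by ring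

theorem hasFPowerSeriesOnBall_integral_mul_exp {K : α → ℝ} {L : α → E →L[ℝ] ℝ}
    (hK : AEStronglyMeasurable K μ) (hL : AEStronglyMeasurable L μ) {r : ℝ≥0} (hr : 0 < r)
    (hint : Integrable (fun u => |K u| * exp (r * ‖L u‖)) μ) :
    HasFPowerSeriesOnBall (fun y => ∫ u, K u * exp (L u y) ∂μ)
      (fun n => ∫ u, (K u • (NormedSpace.expSeries ℝ ℝ).compContinuousLinearMap (L u)) n ∂μ)
      0 r := by
  set q : α → FormalMultilinearSeries ℝ E ℝ :=
    fun u => K u • (NormedSpace.expSeries ℝ ℝ).compContinuousLinearMap (L u)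
  have hterm : ∀ u n, ‖q u n‖ * r ^ n ≤ |K u| * ((r * ‖L u‖) ^ n / n.factorial) := fun u n =>
    norm_smul_expSeries_compContinuousLinearMap_mul_pow_le _ _ r.2 n
  refine hasFPowerSeriesOnBall_integral hr
    (fun u => (hasFPowerSeriesOnBall_const_mul_exp_clm _ _).mono
      (by exact_mod_cast hr) le_top)
    (fun n => ?_) hint (fun u N => ?_)
  · have hmeas : AEStronglyMeasurable (fun u => q u n) μ := by
      refine hK.smul (Continuous.comp_aestronglyMeasurable (g := fun ℓ : E →L[ℝ] ℝ =>
        (NormedSpace.expSeries ℝ ℝ n).compContinuousLinearMap fun _ => ℓ) ?_ hL)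
      exact (ContinuousMultilinearMap.compContinuousLinearMapLRight _).cont.comp
        (continuous_pi fun _ => continuous_id)
    refine (hint.const_mul ((r : ℝ) ^ n)⁻¹).mono' hmeas (ae_of_all _ fun u => ?_)
    rw [le_inv_mul_iff₀ (by positivity), mul_comm]
    refine (hterm u n).trans (mul_le_mul_of_nonneg_left ?_ (abs_nonneg _))
    exact pow_div_factorial_le_exp _ (by positivity) n
  · calc ∑ n ∈ Finset.range N, ‖q u n‖ * r ^ n
        ≤ |K u| * ∑ n ∈ Finset.range N, (r * ‖L u‖) ^ n / n.factorial := by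
          rw [Finset.mul_sum]; exact Finset.sum_le_sum fun n _ => hterm u n
      _ ≤ |K u| * exp (r * ‖L u‖) := by
          gcongr; exact Real.sum_le_exp_of_nonneg (by positivity) N

theorem analyticAt_integral_mul_exp {f : α → ℝ} {L : α → E →L[ℝ] ℝ}
    (hf : AEStronglyMeasurable f μ) (hL : AEStronglyMeasurable L μ) (θ₀ : E) {ε : ℝ}
    (hε : 0 < ε) (hint : Integrable (fun u => |f u| * exp (L u θ₀ + ε * ‖L u‖)) μ) :
    AnalyticAt ℝ (fun θ => ∫ u, f u * exp (L u θ) ∂μ) θ₀ := by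
  set K : α → ℝ := fun u => f u * exp (L u θ₀)
  have hK : AEStronglyMeasurable K μ :=
    hf.mul (continuous_exp.comp_aestronglyMeasurable (hL.apply_continuousLinearMap θ₀))
  have hKint : Integrable (fun u => |K u| * exp (ε.toNNReal * ‖L u‖)) μ := by
    refine hint.congr (ae_of_all _ fun u => ?_)
    simp only [K, Real.coe_toNNReal _ hε.le, abs_mul, abs_exp, exp_add]
    ring
  have hg := (hasFPowerSeriesOnBall_integral_mul_exp hK hL (Real.toNNReal_pos.mpr hε)
    hKint).analyticAt
  have hshift : AnalyticAt ℝ (fun θ => θ - θ₀) θ₀ := analyticAt_id.sub analyticAt_const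
  refine (hg.comp_of_eq hshift (sub_self θ₀)).congr
    (Filter.Eventually.of_forall fun θ => ?_)
  simp only [Function.comp_apply, K, map_sub, mul_assoc, ← exp_add, add_sub_cancel]

end PowerSeriesIntegral

theorem integrable_exp_neg_mul_sq_add_mul_abs {b : ℝ} (hb : 0 < b) (c : ℝ) :
    Integrable fun x : ℝ => exp (-b * x ^ 2 + c * |x|) := by
  refine ((integrable_exp_neg_mul_sq (half_pos hb)).const_mul (exp (c ^ 2 / (2 * b)))).mono'
    (by fun_prop) (ae_of_all _ fun x => ?_)
  rw [Real.norm_eq_abs, abs_exp, ← exp_add, exp_le_exp]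
  -- completing the square in `|x|`
  have hsq : 0 ≤ b / 2 * (|x| - c / b) ^ 2 := by positivity
  have hx : |x| ^ 2 = x ^ 2 := sq_abs x
  field_simp at hsq ⊢
  nlinarith

theorem one_add_sqrt_sum_sq_le_exp {ι : Type*} [Fintype ι] (u : ι → ℝ) :
    1 + √(∑ j, u j ^ 2) ≤ exp (∑ j, |u j|) := by
  have hsqrt : √(∑ j, u j ^ 2) ≤ ∑ j, |u j| := by
    rw [Real.sqrt_le_iff]
    refine ⟨by positivity, ?_⟩
    simpa only [sq_abs] using Finset.sum_sq_le_sq_sum_of_nonneg fun j _ => abs_nonneg (u j)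
  linarith [add_one_le_exp (∑ j, |u j|)]

namespace HeatKernel

variable {d : ℕ}

noncomputable def exponent (u : Fin d → ℝ) : ℝ × (Fin d → ℝ) →L[ℝ] ℝ :=
  ∑ j, ((-(u j ^ 2) / 2) • ContinuousLinearMap.fst ℝ ℝ (Fin d → ℝ) +
    u j • (ContinuousLinearMap.proj j).comp (ContinuousLinearMap.snd ℝ ℝ (Fin d → ℝ)))

theorem exponent_apply (u : Fin d → ℝ) (θ : ℝ × (Fin d → ℝ)) :
    exponent u θ = ∑ j, (-(u j ^ 2) / 2 * θ.1 + u j * θ.2 j) := by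
  simp [exponent]

theorem norm_exponent_le (u : Fin d → ℝ) : ‖exponent u‖ ≤ ∑ j, (u j ^ 2 / 2 + |u j|) := by
  refine (norm_sum_le _ _).trans (Finset.sum_le_sum fun j _ => ?_)
  refine ContinuousLinearMap.opNorm_le_bound _ (by positivity) fun θ => ?_
  have h₁ : |θ.1| ≤ ‖θ‖ := norm_fst_le θ
  have h₂ : |θ.2 j| ≤ ‖θ‖ := (norm_le_pi_norm θ.2 j).trans (norm_snd_le θ)
  simp only [add_apply, smul_apply,
    ContinuousLinearMap.coe_fst', ContinuousLinearMap.comp_apply, ContinuousLinearMap.coe_snd',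
    ContinuousLinearMap.proj_apply, smul_eq_mul, Real.norm_eq_abs]
  calc |-(u j ^ 2) / 2 * θ.1 + u j * θ.2 j| ≤ u j ^ 2 / 2 * |θ.1| + |u j| * |θ.2 j| := by
        refine (abs_add_le _ _).trans_eq ?_
        rw [abs_mul, abs_mul, abs_div, abs_neg, abs_of_nonneg (sq_nonneg _), abs_two]
    _ ≤ (u j ^ 2 / 2 + |u j|) * ‖θ‖ := by nlinarith [abs_nonneg (u j), sq_nonneg (u j)]

theorem continuous_exponent : Continuous (exponent (d := d)) := by
  unfold exponent; fun_prop

theorem integrable_abs_mul_exp_exponent {h : (Fin d → ℝ) → ℝ} (hmeas : Measurable h) {a : ℝ}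
    (ha : 0 ≤ a) {m : ℕ} (hgrowth : ∀ u, |h u| ≤ a * (1 + √(∑ j, u j ^ 2)) ^ m) {r : ℝ}
    (hr : 0 < r) (w : Fin d → ℝ) :
    Integrable fun u => |h u| * exp (exponent u (r, w) + r / 2 * ‖exponent u‖) := by
  set c : Fin d → ℝ := fun j => m + |w j| + r / 2
  have hdom : Integrable fun u : Fin d → ℝ =>
      a * ∏ j, exp (-(r / 4) * u j ^ 2 + c j * |u j|) :=
    (Integrable.fintype_prod fun j =>
      integrable_exp_neg_mul_sq_add_mul_abs (by positivity) (c j)).const_mul a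
  have hcont : Continuous fun u => exponent u (r, w) + r / 2 * ‖exponent u‖ := by
    have := continuous_exponent (d := d); fun_prop
  refine hdom.mono' (hmeas.abs.mul hcont.measurable.exp).aestronglyMeasurable
    (ae_of_all _ fun u => ?_)
  have hh : |h u| ≤ a * exp (∑ j, m * |u j|) := by
    rw [← Finset.mul_sum, exp_nat_mul]
    exact (hgrowth u).trans (by gcongr; exact one_add_sqrt_sum_sq_le_exp u)
  have hexp : ∑ j, m * |u j| + (exponent u (r, w) + r / 2 * ‖exponent u‖) ≤
      ∑ j, (-(r / 4) * u j ^ 2 + c j * |u j|) := by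
    have hnorm : r / 2 * ‖exponent u‖ ≤ ∑ j, r / 2 * (u j ^ 2 / 2 + |u j|) := by
      rw [← Finset.mul_sum]; gcongr; exact norm_exponent_le u
    calc ∑ j, m * |u j| + (exponent u (r, w) + r / 2 * ‖exponent u‖)
        ≤ ∑ j, (m * |u j| + (-(u j ^ 2) / 2 * r + u j * w j) +
            r / 2 * (u j ^ 2 / 2 + |u j|)) := by
          simp only [exponent_apply, Finset.sum_add_distrib]; linarith
      _ ≤ ∑ j, (-(r / 4) * u j ^ 2 + c j * |u j|) := by
          refine Finset.sum_le_sum fun j _ => ?_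
          have : u j * w j ≤ |u j| * |w j| := (le_abs_self _).trans_eq (abs_mul _ _)
          simp only [c]; nlinarith
  rw [Real.norm_eq_abs, abs_of_nonneg (by positivity), ← exp_sum]
  calc |h u| * exp (exponent u (r, w) + r / 2 * ‖exponent u‖)
      ≤ a * exp (∑ j, m * |u j|) * exp (exponent u (r, w) + r / 2 * ‖exponent u‖) := by
        gcongr
    _ ≤ a * exp (∑ j, (-(r / 4) * u j ^ 2 + c j * |u j|)) := by
        rw [mul_assoc, ← exp_add]; gcongr

theorem analyticAt_integral_mul_exp_exponent {h : (Fin d → ℝ) → ℝ} (hmeas : Measurable h)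
    {a : ℝ} (ha : 0 ≤ a) {m : ℕ} (hgrowth : ∀ u, |h u| ≤ a * (1 + √(∑ j, u j ^ 2)) ^ m)
    {r : ℝ} (hr : 0 < r) (w : Fin d → ℝ) :
    AnalyticAt ℝ (fun θ => ∫ u, h u * exp (exponent u θ)) (r, w) :=
  analyticAt_integral_mul_exp hmeas.aestronglyMeasurable
    continuous_exponent.aestronglyMeasurable (r, w) (half_pos hr)
    (integrable_abs_mul_exp_exponent hmeas ha hgrowth hr w)

theorem integral_mul_exp_neg_sum_sq_div (h : (Fin d → ℝ) → ℝ) {s : ℝ} (hs : 0 < s)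
    (x : Fin d → ℝ) :
    ∫ u, h u * exp (-(∑ j, (u j - x j) ^ 2) / (2 * s)) =
      exp (-(∑ j, x j ^ 2) / (2 * s)) * ∫ u, h u * exp (exponent u (s⁻¹, s⁻¹ • x)) := by
  rw [← integral_const_mul]
  congr 1 with u
  rw [mul_left_comm, ← exp_add, exponent_apply]
  congr 2
  simp only [neg_div, Finset.sum_div, ← Finset.sum_neg_distrib, ← Finset.sum_add_distrib]
  refine Finset.sum_congr rfl fun j _ => ?_
  simp only [Pi.smul_apply, smul_eq_mul]
  field_simp
  ring

end HeatKernel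

theorem analyticAt_rpow_const {x : ℝ} (hx : x ≠ 0) (p : ℝ) :
    AnalyticAt ℝ (fun y : ℝ => y ^ p) x :=
  (Real.contDiffAt_rpow_const_of_ne (n := ω) hx).analyticAt

theorem analyticAt_exp_neg_sum_sq_div {d : ℕ} {T t₀ : ℝ} (ht₀ : t₀ < T) (x₀ : Fin d → ℝ) :
    AnalyticAt ℝ (fun q : ℝ × (Fin d → ℝ) => exp (-(∑ j, q.2 j ^ 2) / (2 * (T - q.1))))
      (t₀, x₀) := by
  have hx : ∀ j, AnalyticAt ℝ (fun q : ℝ × (Fin d → ℝ) => q.2 j) (t₀, x₀) := fun j =>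
    ((ContinuousLinearMap.proj (R := ℝ) (φ := fun _ : Fin d => ℝ) j).comp
      (ContinuousLinearMap.snd ℝ ℝ (Fin d → ℝ))).analyticAt (t₀, x₀)
  have hs₀ : 2 * (T - t₀) ≠ 0 := by linarith
  exact analyticAt_rexp.comp (((Finset.analyticAt_fun_sum _ fun j _ => (hx j).pow 2).neg).div
    (analyticAt_const.mul (analyticAt_const.sub analyticAt_fst)) hs₀)

open HeatKernel in
theorem stmt_5_general (d : ℕ) (T : ℝ)
    (h : (Fin d → ℝ) → ℝ) (hmeas : Measurable h)
    (a : ℝ) (ha : 0 ≤ a) (m : ℕ)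
    (hgrowth : ∀ u, |h u| ≤ a * (1 + Real.sqrt (∑ j, u j ^ 2)) ^ m)
    (v : ℝ × (Fin d → ℝ) → ℝ)
    (hv : ∀ t ∈ Ioo 0 T, ∀ x : Fin d → ℝ,
      v (t, x) = (2 * π * (T - t)) ^ (-(d : ℝ) / 2) *
        ∫ u : Fin d → ℝ, h u * Real.exp (-(∑ j, (u j - x j) ^ 2) / (2 * (T - t)))) :
    AnalyticOnNhd ℝ v (Ioo 0 T ×ˢ (univ : Set (Fin d → ℝ))) := by
  rintro ⟨t₀, x₀⟩ ⟨ht₀, -⟩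
  have hs₀ : 0 < T - t₀ := sub_pos.mpr ht₀.2
  have hs : AnalyticAt ℝ (fun q : ℝ × (Fin d → ℝ) => T - q.1) (t₀, x₀) :=
    analyticAt_const.sub analyticAt_fst
  have hsinv := hs.inv hs₀.ne'
  have hprefactor : AnalyticAt ℝ (fun q : ℝ × (Fin d → ℝ) =>
      (2 * π * (T - q.1)) ^ (-(d : ℝ) / 2)) (t₀, x₀) :=
    (analyticAt_rpow_const (by positivity) _).comp (analyticAt_const.mul hs)
  have hlaplace : AnalyticAt ℝ (fun q : ℝ × (Fin d → ℝ) =>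
      ∫ u, h u * exp (exponent u ((T - q.1)⁻¹, (T - q.1)⁻¹ • q.2))) (t₀, x₀) :=
    (analyticAt_integral_mul_exp_exponent hmeas ha hgrowth (inv_pos.mpr hs₀) _).fun_comp
      (f := fun q : ℝ × (Fin d → ℝ) => ((T - q.1)⁻¹, (T - q.1)⁻¹ • q.2))
      (hsinv.prod (hsinv.smul analyticAt_snd))
  have hgauss := analyticAt_exp_neg_sum_sq_div ht₀.2 x₀
  refine (hprefactor.mul (hgauss.mul hlaplace)).congr (Filter.eventually_of_mem
    ((isOpen_Ioo.prod isOpen_univ).mem_nhds ⟨ht₀, mem_univ _⟩) ?_)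
  rintro ⟨t, x⟩ ⟨ht, -⟩
  rw [hv t ht x, integral_mul_exp_neg_sum_sq_div h (sub_pos.mpr ht.2)]
  rfl

/-- The Gaussian convolution
`v(t,x) = (2π(T−t))^{−d/2} ∫ h(u) exp(−|u−x|²/(2(T−t))) du` of a measurable payoff `h` of
polynomial growth is real analytic, jointly in `(t,x)`, on `(0,T) × ℝ^d`. -/
theorem stmt_5 (d : ℕ) (hd : 1 ≤ d) (T : ℝ) (hT : 0 < T)
    (h : (Fin d → ℝ) → ℝ) (hmeas : Measurable h)
    (a : ℝ) (ha : 0 ≤ a) (m : ℕ)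
    (hgrowth : ∀ u, |h u| ≤ a * (1 + Real.sqrt (∑ j, u j ^ 2)) ^ m)
    (v : ℝ × (Fin d → ℝ) → ℝ)
    (hv : ∀ t ∈ Ioo 0 T, ∀ x : Fin d → ℝ,
      v (t, x) = (2 * π * (T - t)) ^ (-(d : ℝ) / 2) *
        ∫ u : Fin d → ℝ, h u * Real.exp (-(∑ j, (u j - x j) ^ 2) / (2 * (T - t)))) :
    AnalyticOnNhd ℝ v (Ioo 0 T ×ˢ (univ : Set (Fin d → ℝ))) :=
  stmt_5_general d T h hmeas a ha m hgrowth v hv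
end

section
/- There exist constants C > 0 and δ > 0 such that for every s > 0, every τ ∈ ℝ with |τ| < s, every y ∈ ℝ^d with |y| < √s, and every z ∈ ℝ^d, one has |exp( − Σ_{j=1}^d (z_j − i y_j)² / (2(s+iτ)) )| ≤ C exp( − δ |z|² / (2s) ). -/
open Real Finset

/-!
The real part of the exponent is `(s (|y|² - |z|²) + 2τ ⟨z, y⟩) / (2 (s² + τ²))`. By Cauchy–Schwarz
and AM–GM, `|⟨z, y⟩| ≤ |z| √s ≤ |z|² / 4 + s`, so with `|τ| < s` and `|y|² ≤ s` the numerator is at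
most `3 s² - s |z|² / 2`; as `s² ≤ s² + τ² < 2 s²`, the exponent is at most `3/2 - |z|² / (8 s)`.
-/

lemma ofReal_sub_I_mul_sq (a b : ℝ) :
    ((a : ℂ) - Complex.I * b) ^ 2 = ((a ^ 2 - b ^ 2 : ℝ) : ℂ) - 2 * ((a * b : ℝ) : ℂ) * Complex.I := by
  push_cast
  linear_combination (b : ℂ) ^ 2 * Complex.I_sq

lemma sum_ofReal_sub_I_mul_sq {ι : Type*} [Fintype ι] (z y : ι → ℝ) :
    ∑ j, ((z j : ℂ) - Complex.I * y j) ^ 2 =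
      ((∑ j, z j ^ 2 - ∑ j, y j ^ 2 : ℝ) : ℂ) - 2 * ((∑ j, z j * y j : ℝ) : ℂ) * Complex.I := by
  simp only [ofReal_sub_I_mul_sq, sum_sub_distrib, ← sum_mul, ← mul_sum, ← Complex.ofReal_sum]

lemma re_neg_sum_ofReal_sub_I_mul_sq_div {ι : Type*} [Fintype ι] (z y : ι → ℝ) (s τ : ℝ) :
    (-(∑ j, ((z j : ℂ) - Complex.I * y j) ^ 2) / (2 * ((s : ℂ) + Complex.I * τ))).re =
      (s * (∑ j, y j ^ 2 - ∑ j, z j ^ 2) + 2 * τ * ∑ j, z j * y j) / (2 * (s ^ 2 + τ ^ 2)) := by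
  rw [sum_ofReal_sub_I_mul_sq, Complex.div_re]
  simp only [Complex.neg_re, Complex.neg_im, Complex.sub_re, Complex.sub_im, Complex.mul_re,
    Complex.mul_im, Complex.add_re, Complex.add_im, Complex.ofReal_re, Complex.ofReal_im,
    Complex.I_re, Complex.I_im, Complex.re_ofNat, Complex.im_ofNat, Complex.normSq_apply]
  rw [← add_div]
  conv_rhs => rw [← mul_div_mul_left _ _ (two_ne_zero' ℝ)]
  congr 1 <;> ring

lemma gaussian_exponent_le {s τ P Q R : ℝ} (hs : 0 < s) (hτ : |τ| < s) (hQ : Q ≤ s)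
    (hR : R ^ 2 ≤ P * s) :
    (s * (Q - P) + 2 * τ * R) / (2 * (s ^ 2 + τ ^ 2)) ≤ 3 / 2 - P / (8 * s) := by
  rw [div_le_iff₀ (by positivity)]
  have hP : 0 ≤ P := nonneg_of_mul_nonneg_left ((sq_nonneg R).trans hR) hs
  have hR_le : |R| ≤ P / 4 + s :=
    abs_le_of_sq_le_sq (by nlinarith [sq_nonneg (P / 4 - s)]) (by positivity)
  have hτR : τ * R ≤ s * (P / 4 + s) :=
    (le_abs_self _).trans (abs_mul τ R ▸ mul_le_mul hτ.le hR_le (abs_nonneg R) hs.le)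
  have hτs : τ ^ 2 ≤ s ^ 2 := sq_le_sq' (abs_lt.1 hτ).1.le (abs_lt.1 hτ).2.le
  have hP_term : P * (s ^ 2 + τ ^ 2) / (4 * s) ≤ P * s / 2 := by
    rw [div_le_iff₀ (by positivity)]
    nlinarith
  calc s * (Q - P) + 2 * τ * R ≤ 3 * s ^ 2 - P * s / 2 := by nlinarith
    _ ≤ 3 * (s ^ 2 + τ ^ 2) - P * (s ^ 2 + τ ^ 2) / (4 * s) := by nlinarith [sq_nonneg τ]
    _ = (3 / 2 - P / (8 * s)) * (2 * (s ^ 2 + τ ^ 2)) := by field_simp; ring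

theorem stmt_7_general (d : ℕ) :
    ∃ C > (0 : ℝ), ∃ δ > (0 : ℝ), ∀ s : ℝ, 0 < s → ∀ τ : ℝ, |τ| < s →
      ∀ y : Fin d → ℝ, Real.sqrt (∑ j, y j ^ 2) < Real.sqrt s →
      ∀ z : Fin d → ℝ,
        ‖Complex.exp
            (-(∑ j, ((z j : ℂ) - Complex.I * (y j : ℂ)) ^ 2) /
              (2 * ((s : ℂ) + Complex.I * (τ : ℂ))))‖ ≤
          C * Real.exp (-δ * (∑ j, z j ^ 2) / (2 * s)) := by
  refine ⟨exp (3 / 2), exp_pos _, 1 / 4, by norm_num, fun s hs τ hτ y hy z => ?_⟩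
  have hy_sq : ∑ j, y j ^ 2 ≤ s :=
    ((sqrt_lt_sqrt_iff (sum_nonneg fun j _ => sq_nonneg (y j))).1 hy).le
  have hzy : (∑ j, z j * y j) ^ 2 ≤ (∑ j, z j ^ 2) * s :=
    (sum_mul_sq_le_sq_mul_sq _ z y).trans
      (mul_le_mul_of_nonneg_left hy_sq (sum_nonneg fun j _ => sq_nonneg (z j)))
  rw [Complex.norm_exp, re_neg_sum_ofReal_sub_I_mul_sq_div, ← exp_add]
  refine exp_le_exp.2 ((gaussian_exponent_le hs hτ hy_sq hzy).trans_eq ?_)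
  ring

/-- The kernel estimate (4.4) of the paper: there are universal constants
`C, δ > 0` such that for all `s > 0`, `|τ| < s`, `|y| < √s` (Euclidean norm on `ℝ^d`) and
all `z ∈ ℝ^d`, `|exp(−Σ_j (z_j − i y_j)²/(2(s+iτ)))| ≤ C exp(−δ|z|²/(2s))`. -/
theorem stmt_7 (d : ℕ) (hd : 1 ≤ d) :
    ∃ C > (0 : ℝ), ∃ δ > (0 : ℝ), ∀ s : ℝ, 0 < s → ∀ τ : ℝ, |τ| < s →
      ∀ y : Fin d → ℝ, Real.sqrt (∑ j, y j ^ 2) < Real.sqrt s →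
      ∀ z : Fin d → ℝ,
        ‖Complex.exp
            (-(∑ j, ((z j : ℂ) - Complex.I * (y j : ℂ)) ^ 2) /
              (2 * ((s : ℂ) + Complex.I * (τ : ℂ))))‖ ≤
          C * Real.exp (-δ * (∑ j, z j ^ 2) / (2 * s)) :=
  stmt_7_general d
end

section
/- Let d ≥ 2, T > 0, let Σ be a symmetric positive definite d×d real matrix, and let h₁,…,h_d : ℝ → ℝ be Lebesgue measurable with polynomial growth, i.e. |h_i(r)| ≤ a(1+|r|)^m for all r ∈ ℝ and some constants a ≥ 0, m ∈ ℕ. For (t,x) ∈ (0,T)×ℝ^d define v_i(t,x) = ∫_{ℝ^d} h_i(u₁) φ_{(T−t)Σ}(u−x) du. Then each v_i is differentiable in x, and the matrix G(t,x) = (∂v_i/∂x_j(t,x))_{1≤i,j≤d} satisfies det G(t,x) = 0 for every (t,x) ∈ (0,T)×ℝ^d. -/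
/-!
Translating the integration variable by `x₀ e₀ - x` shows that `v i t x` depends on `x` only
through its first coordinate: `v i t = g i ∘ pr₀` with `g i σ = ∫ h i (u₀) φ(u - σ e₀) du`.
The Gaussian factor dominates the polynomial growth of `h i` uniformly for `σ` near any `σ₀`,
so `g i` can be differentiated under the integral sign. Hence every row of `G(t, x)` is a
multiple of `e₀ᵀ`, and the column of `G(t, x)` indexed by `1` vanishes.
-/

open MeasureTheory Set Real Matrix

section

variable {ι : Type*} [Fintype ι]

lemma abs_dotProduct_le (v w : ι → ℝ) : |v ⬝ᵥ w| ≤ (∑ i, |w i|) * ‖v‖ := by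
  rw [Finset.sum_mul]
  refine (Finset.abs_sum_le_sum_abs _ _).trans (Finset.sum_le_sum fun i _ => ?_)
  rw [abs_mul, mul_comm]
  exact mul_le_mul_of_nonneg_left (by simpa using norm_le_pi_norm v i) (abs_nonneg _)

lemma Matrix.PosDef.exists_pos_mul_sq_norm_le [Nonempty ι] {M : Matrix ι ι ℝ}
    (hM : M.PosDef) : ∃ c > 0, ∀ z : ι → ℝ, c * ‖z‖ ^ 2 ≤ z ⬝ᵥ (M *ᵥ z) := by
  obtain ⟨z₀, hz₀, hmin⟩ := (isCompact_sphere (0 : ι → ℝ) 1).exists_isMinOn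
    (NormedSpace.sphere_nonempty.mpr zero_le_one)
    (show Continuous fun z : ι → ℝ => z ⬝ᵥ (M *ᵥ z) by fun_prop).continuousOn
  have hz₀ne : z₀ ≠ 0 := ne_zero_of_mem_unit_sphere ⟨z₀, hz₀⟩
  refine ⟨z₀ ⬝ᵥ (M *ᵥ z₀), by simpa using hM.dotProduct_mulVec_pos hz₀ne, fun z => ?_⟩
  rcases eq_or_ne z 0 with rfl | hz
  · simp
  have hzn : 0 < ‖z‖ := norm_pos_iff.mpr hz
  -- the quadratic form is 2-homogeneous: compare with its value at `z / ‖z‖` on the sphere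
  have hle : z₀ ⬝ᵥ (M *ᵥ z₀) ≤ (‖z‖⁻¹ • z) ⬝ᵥ (M *ᵥ (‖z‖⁻¹ • z)) :=
    hmin (show ‖z‖⁻¹ • z ∈ Metric.sphere (0 : ι → ℝ) 1 by simp [norm_smul, hzn.ne'])
  simp only [mulVec_smul, smul_dotProduct, dotProduct_smul, smul_eq_mul] at hle
  rw [← mul_assoc, ← sq, inv_pow, ← div_eq_inv_mul, le_div_iff₀ (by positivity)] at hle
  linarith

lemma integrable_exp_neg_mul_sq_norm [Nonempty ι] {b : ℝ} (hb : 0 < b) :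
    Integrable fun u : ι → ℝ => exp (-b * ‖u‖ ^ 2) := by
  have hcard : (0 : ℝ) < Fintype.card ι := by exact_mod_cast Fintype.card_pos
  refine (Integrable.fintype_prod (f := fun _ r => exp (-(b / Fintype.card ι) * r ^ 2))
    fun _ => integrable_exp_neg_mul_sq (by positivity)).mono' (by fun_prop) ?_
  filter_upwards with u
  rw [Real.norm_of_nonneg (exp_nonneg _), ← exp_sum, exp_le_exp, ← Finset.mul_sum]
  have hsum : ∑ i, u i ^ 2 ≤ Fintype.card ι * ‖u‖ ^ 2 := by
    calc ∑ i, u i ^ 2 ≤ ∑ _i : ι, ‖u‖ ^ 2 := Finset.sum_le_sum fun i _ => by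
          simpa [sq_abs] using pow_le_pow_left₀ (norm_nonneg _) (norm_le_pi_norm u i) 2
      _ = _ := by simp
  rw [neg_mul, neg_mul, neg_le_neg_iff, div_mul_eq_mul_div, div_le_iff₀ hcard]
  nlinarith

lemma integrable_exp_mul_norm_sub_mul_sq_norm [Nonempty ι] (K : ℝ) {b : ℝ} (hb : 0 < b) :
    Integrable fun u : ι → ℝ => exp (K * ‖u‖ - b * ‖u‖ ^ 2) := by
  refine ((integrable_exp_neg_mul_sq_norm (half_pos hb)).const_mul
    (exp (K ^ 2 / (2 * b)))).mono' (by fun_prop) (Filter.Eventually.of_forall fun u => ?_)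
  rw [Real.norm_of_nonneg (exp_nonneg _), ← exp_add, exp_le_exp]
  -- complete the square: `K t ≤ K² / (2b) + (b/2) t²`
  field_simp
  nlinarith [sq_nonneg (b * ‖u‖ - K)]

lemma Matrix.IsHermitian.dotProduct_mulVec_sub_smul {M : Matrix ι ι ℝ} (hM : M.IsHermitian)
    (u e : ι → ℝ) (σ : ℝ) :
    (u - σ • e) ⬝ᵥ (M *ᵥ (u - σ • e)) =
      u ⬝ᵥ (M *ᵥ u) - σ * (2 * (u ⬝ᵥ (M *ᵥ e))) + σ ^ 2 * (e ⬝ᵥ (M *ᵥ e)) := by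
  have hsymm : e ⬝ᵥ (M *ᵥ u) = u ⬝ᵥ (M *ᵥ e) := by
    rw [dotProduct_mulVec, ← mulVec_transpose, ← conjTranspose_eq_transpose_of_trivial, hM.eq,
      dotProduct_comm]
  simp only [mulVec_sub, mulVec_smul, dotProduct_sub, sub_dotProduct, dotProduct_smul,
    smul_dotProduct, smul_eq_mul, hsymm]
  ring

lemma hasDerivAt_exp_neg_dotProduct_mulVec_sub_smul {M : Matrix ι ι ℝ}
    (hM : M.IsHermitian) (u e : ι → ℝ) (σ : ℝ) :
    HasDerivAt (fun τ : ℝ => exp (-((u - τ • e) ⬝ᵥ (M *ᵥ (u - τ • e)))))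
      (exp (-((u - σ • e) ⬝ᵥ (M *ᵥ (u - σ • e)))) * (2 * ((u - σ • e) ⬝ᵥ (M *ᵥ e)))) σ := by
  simp only [hM.dotProduct_mulVec_sub_smul u e]
  refine HasDerivAt.exp (((((hasDerivAt_id σ).mul_const _).const_sub _).add
    ((hasDerivAt_pow 2 σ).mul_const _)).neg) |>.congr_deriv ?_
  simp only [Pi.neg_apply, Pi.add_apply, id, sub_dotProduct, smul_dotProduct, smul_eq_mul]
  ring

lemma exp_neg_dotProduct_mulVec_sub_smul_le {M : Matrix ι ι ℝ} {c : ℝ} (hc : 0 ≤ c)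
    (hcM : ∀ z : ι → ℝ, c * ‖z‖ ^ 2 ≤ z ⬝ᵥ (M *ᵥ z)) (u e : ι → ℝ) {σ r : ℝ}
    (hr : |σ| * ‖e‖ ≤ r) :
    exp (-((u - σ • e) ⬝ᵥ (M *ᵥ (u - σ • e)))) ≤ exp (2 * c * r * ‖u‖ - c * ‖u‖ ^ 2) := by
  have htri : ‖u‖ ≤ ‖u - σ • e‖ + r := by
    calc ‖u‖ ≤ ‖u - σ • e‖ + ‖σ • e‖ := norm_le_norm_sub_add u (σ • e)
      _ ≤ ‖u - σ • e‖ + r := by rw [norm_smul, Real.norm_eq_abs]; linarith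
  have hr₀ : 0 ≤ r := (by positivity : 0 ≤ |σ| * ‖e‖).trans hr
  have hsq : ‖u‖ ^ 2 - 2 * r * ‖u‖ ≤ ‖u - σ • e‖ ^ 2 := by
    rcases le_total r ‖u‖ with h | h
    · nlinarith [pow_le_pow_left₀ (sub_nonneg.mpr h) (sub_le_iff_le_add.mpr htri) 2]
    · nlinarith [norm_nonneg u, sq_nonneg ‖u - σ • e‖]
  rw [exp_le_exp]
  nlinarith [hcM (u - σ • e), mul_le_mul_of_nonneg_left hsq hc]

lemma abs_dotProduct_sub_smul_le (u e w : ι → ℝ) {σ r : ℝ} (hr : |σ| * ‖e‖ ≤ r) :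
    |(u - σ • e) ⬝ᵥ w| ≤ (∑ i, |w i|) * (1 + r) * exp ‖u‖ := by
  have hr₀ : 0 ≤ r := (by positivity : 0 ≤ |σ| * ‖e‖).trans hr
  have hz : ‖u - σ • e‖ ≤ (1 + r) * exp ‖u‖ := by
    have : ‖u - σ • e‖ ≤ ‖u‖ + r :=
      (norm_sub_le _ _).trans (by rw [norm_smul, norm_eq_abs]; linarith)
    nlinarith [add_one_le_exp ‖u‖, norm_nonneg u]
  rw [mul_assoc]
  exact (abs_dotProduct_le _ _).trans (mul_le_mul_of_nonneg_left hz (by positivity))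

theorem hasDerivAt_integral_mul_exp_neg_dotProduct_mulVec_sub_smul [Nonempty ι]
    {M : Matrix ι ι ℝ} (hM : M.PosDef) {f : (ι → ℝ) → ℝ} (hf : AEStronglyMeasurable f)
    {a K : ℝ} (hfK : ∀ u, |f u| ≤ a * exp (K * ‖u‖)) (e : ι → ℝ) (σ₀ : ℝ) :
    HasDerivAt (fun σ => ∫ u, f u * exp (-((u - σ • e) ⬝ᵥ (M *ᵥ (u - σ • e)))))
      (∫ u, f u * (exp (-((u - σ₀ • e) ⬝ᵥ (M *ᵥ (u - σ₀ • e)))) *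
        (2 * ((u - σ₀ • e) ⬝ᵥ (M *ᵥ e))))) σ₀ := by
  obtain ⟨c, hc, hcM⟩ := hM.exists_pos_mul_sq_norm_le
  set r := (|σ₀| + 1) * ‖e‖
  set L := ∑ i, |(M *ᵥ e) i|
  have hr : ∀ σ ∈ Metric.ball σ₀ 1, |σ| * ‖e‖ ≤ r := fun σ hσ => by
    have : |σ| ≤ |σ₀| + 1 := by
      have := abs_sub_abs_le_abs_sub σ σ₀
      rw [Metric.mem_ball, Real.dist_eq] at hσ
      linarith
    exact mul_le_mul_of_nonneg_right this (norm_nonneg e)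
  have hF_le : ∀ σ ∈ Metric.ball σ₀ 1, ∀ u,
      ‖f u * exp (-((u - σ • e) ⬝ᵥ (M *ᵥ (u - σ • e))))‖ ≤
        a * exp ((K + 2 * c * r) * ‖u‖ - c * ‖u‖ ^ 2) := fun σ hσ u => by
    rw [Real.norm_eq_abs, abs_mul, abs_of_pos (exp_pos _), add_mul, add_sub_assoc, exp_add,
      ← mul_assoc]
    exact mul_le_mul (hfK u) (exp_neg_dotProduct_mulVec_sub_smul_le hc.le hcM u e (hr σ hσ))
      (exp_nonneg _) ((abs_nonneg _).trans (hfK u))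
  refine (hasDerivAt_integral_of_dominated_loc_of_deriv_le (Metric.ball_mem_nhds σ₀ one_pos)
    (Filter.Eventually.of_forall fun σ => hf.mul (by fun_prop)) ?_ (hf.mul (by fun_prop))
    (bound := fun u => 2 * (L * (1 + r)) * a * exp ((K + 2 * c * r + 1) * ‖u‖ - c * ‖u‖ ^ 2))
    (Filter.Eventually.of_forall fun u σ hσ => ?_)
    ((integrable_exp_mul_norm_sub_mul_sq_norm _ hc).const_mul _)
    (Filter.Eventually.of_forall fun u σ _ =>
      (hasDerivAt_exp_neg_dotProduct_mulVec_sub_smul hM.isHermitian u e σ).const_mul (f u))).2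
  · exact ((integrable_exp_mul_norm_sub_mul_sq_norm _ hc).const_mul a).mono'
      (hf.mul (by fun_prop))
      (Filter.Eventually.of_forall (hF_le σ₀ (Metric.mem_ball_self one_pos)))
  · rw [← mul_assoc, norm_mul]
    calc ‖f u * exp (-((u - σ • e) ⬝ᵥ (M *ᵥ (u - σ • e))))‖ *
          ‖2 * ((u - σ • e) ⬝ᵥ (M *ᵥ e))‖
        ≤ a * exp ((K + 2 * c * r) * ‖u‖ - c * ‖u‖ ^ 2) * (2 * (L * (1 + r) * exp ‖u‖)) := by
          refine mul_le_mul (hF_le σ hσ u) ?_ (norm_nonneg _)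
            ((norm_nonneg _).trans (hF_le σ hσ u))
          rw [norm_mul, Real.norm_two, Real.norm_eq_abs]
          exact mul_le_mul_of_nonneg_left (abs_dotProduct_sub_smul_le u e _ (hr σ hσ)) two_pos.le
      _ = _ := by rw [add_mul _ 1, add_sub_right_comm, exp_add, one_mul]; ring

lemma abs_comp_apply_le_mul_exp_norm {g : ℝ → ℝ} {a : ℝ} {m : ℕ}
    (hg : ∀ r, |g r| ≤ a * (1 + |r|) ^ m) (u : ι → ℝ) (i : ι) :
    |g (u i)| ≤ a * exp (m * ‖u‖) := by
  have ha : 0 ≤ a := by simpa using (abs_nonneg _).trans (hg 0)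
  refine (hg (u i)).trans (mul_le_mul_of_nonneg_left ?_ ha)
  rw [exp_nat_mul]
  refine pow_le_pow_left₀ (by positivity) ?_ m
  linarith [add_one_le_exp ‖u‖, show |u i| ≤ ‖u‖ from norm_le_pi_norm u i]

lemma integral_mul_sub_eq_integral_mul_sub_smul_single [DecidableEq ι] (g : ℝ → ℝ)
    (k : (ι → ℝ) → ℝ) (i : ι) (x : ι → ℝ) :
    ∫ u, g (u i) * k (u - x) = ∫ u, g (u i) * k (u - x i • Pi.single i 1) := by
  conv_rhs => rw [← integral_add_right_eq_self _ (x i • Pi.single i 1 - x)]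
  congr 1 with u
  rw [show (u + (x i • Pi.single i 1 - x) : ι → ℝ) i = u i by simp]
  congr 2
  abel

theorem exists_hasFDerivAt_integral_comp_apply_mul_exp_neg_dotProduct_mulVec_sub [Nonempty ι]
    [DecidableEq ι] {M : Matrix ι ι ℝ} (hM : M.PosDef) {g : ℝ → ℝ} (hg : Measurable g)
    {a : ℝ} {m : ℕ} (hgrowth : ∀ r, |g r| ≤ a * (1 + |r|) ^ m) (i : ι) (x : ι → ℝ) :
    ∃ D : ℝ, HasFDerivAt (fun y => ∫ u, g (u i) * exp (-((u - y) ⬝ᵥ (M *ᵥ (u - y)))))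
      (D • ContinuousLinearMap.proj (R := ℝ) (φ := fun _ : ι => ℝ) i) x := by
  set pᵢ := ContinuousLinearMap.proj (R := ℝ) (φ := fun _ : ι => ℝ) i
  have hcomp : (fun y => ∫ u, g (u i) * exp (-((u - y) ⬝ᵥ (M *ᵥ (u - y))))) =
      (fun σ => ∫ u, g (u i) * exp (-((u - σ • Pi.single i 1) ⬝ᵥ
        (M *ᵥ (u - σ • Pi.single i 1))))) ∘ pᵢ :=
    funext fun y => integral_mul_sub_eq_integral_mul_sub_smul_single g
      (fun z => exp (-(z ⬝ᵥ (M *ᵥ z)))) i y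
  rw [hcomp]
  exact ⟨_, (hasDerivAt_integral_mul_exp_neg_dotProduct_mulVec_sub_smul hM
    (hg.comp (measurable_pi_apply i)).aestronglyMeasurable
    (abs_comp_apply_le_mul_exp_norm hgrowth · i) _ (x i)).comp_hasFDerivAt x pᵢ.hasFDerivAt⟩

end

/-- Counterexample of Section 4.1: with `d ≥ 2` correlated Gaussian factors
(covariance `Σ`), if all payoffs `h_i` depend only on the first coordinate, the matrix
`G(t,x) = (∂v_i/∂x_j(t,x))` of the price functions
`v_i(t,x) = ∫ h_i(u₁) φ_{(T−t)Σ}(u−x) du` is everywhere singular. -/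
theorem stmt_11 (d : ℕ) (hd : 2 ≤ d) (T : ℝ)
    (Cov : Matrix (Fin d) (Fin d) ℝ) (hCov : Cov.PosDef)
    (h : Fin d → ℝ → ℝ) (hmeas : ∀ i, Measurable (h i))
    (a : ℝ) (m : ℕ)
    (hgrowth : ∀ i, ∀ r : ℝ, |h i r| ≤ a * (1 + |r|) ^ m)
    (φ : ℝ → (Fin d → ℝ) → ℝ)
    (hφ : ∀ s : ℝ, 0 < s → ∀ z, φ s z = ((2 * π * s) ^ d * Cov.det) ^ (-(1 : ℝ) / 2) *
      Real.exp (-(z ⬝ᵥ (Cov⁻¹ *ᵥ z)) / (2 * s)))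
    (v : Fin d → ℝ → (Fin d → ℝ) → ℝ)
    (hv : ∀ i, ∀ t ∈ Ioo 0 T, ∀ x : Fin d → ℝ,
      v i t x = ∫ u : Fin d → ℝ, h i (u ⟨0, by omega⟩) * φ (T - t) (u - x)) :
    ∀ t ∈ Ioo 0 T, ∀ x : Fin d → ℝ,
      (∀ i, DifferentiableAt ℝ (v i t) x) ∧
      (Matrix.of fun i j => fderiv ℝ (v i t) x (Pi.single j 1)).det = 0 := by
  intro t ht x
  have hs : 0 < T - t := sub_pos.mpr ht.2
  set i₀ : Fin d := ⟨0, by omega⟩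
  have : Nonempty (Fin d) := ⟨i₀⟩
  set C := ((2 * π * (T - t)) ^ d * Cov.det) ^ (-(1 : ℝ) / 2)
  set M := (2 * (T - t))⁻¹ • Cov⁻¹
  have hkernel : ∀ z, φ (T - t) z = C * exp (-(z ⬝ᵥ (M *ᵥ z))) := fun z => by
    rw [hφ _ hs, smul_mulVec, dotProduct_smul, smul_eq_mul]
    congr 2
    ring
  have hv_eq : ∀ i,
      v i t = fun y => ∫ u, (h i (u i₀) * C) * exp (-((u - y) ⬝ᵥ (M *ᵥ (u - y)))) :=
    fun i => funext fun y => by simp_rw [hv i t ht y, hkernel, mul_assoc]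
  have hgrowthC : ∀ i r, |h i r * C| ≤ a * |C| * (1 + |r|) ^ m := fun i r => by
    rw [abs_mul, mul_right_comm]
    exact mul_le_mul_of_nonneg_right (hgrowth i r) (abs_nonneg C)
  have hderiv : ∀ i, ∃ D : ℝ, HasFDerivAt (v i t)
      (D • ContinuousLinearMap.proj (R := ℝ) (φ := fun _ : Fin d => ℝ) i₀) x := fun i =>
    hv_eq i ▸ exists_hasFDerivAt_integral_comp_apply_mul_exp_neg_dotProduct_mulVec_sub
      (hCov.inv.smul (by positivity)) ((hmeas i).mul_const C) (hgrowthC i) i₀ x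
  choose D hD using hderiv
  refine ⟨fun i => (hD i).differentiableAt,
    det_eq_zero_of_column_eq_zero ⟨1, by omega⟩ fun i => ?_⟩
  simp [(hD i).fderiv, i₀, Fin.ext_iff]
end
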